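/- Fix δ > 0, let φ satisfy the smoothness assumption with φ(x) ~ x log x as x → ∞, and let P₀ be a probability measure on ℝ that is either heavy-tailed with index γ > 1 or has Weibull-type tails with index γ < 1. Let ρ_{1−β} be the tail-weighted risk measure associated with a weight function w for which there exists m > 0 with inf_{t ∈ (0,m)} w(t) > 0. Then for every β ∈ (0,1), ρ_{1−β}(B_{φ,δ}(P₀)) = ∞. -/

import Mathlib

open MeasureTheory Filter Set
open scoped ENNReal NNReal Topology Classical

noncomputable section

/-- `f` is regularly varying at infinity with index `ρ`:
`f (t*x) / f t → x ^ ρ` as `t → ∞` for every `x > 0`.  Slowly varying means index `0`. -/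
def RegVary (f : ℝ → ℝ) (ρ : ℝ) : Prop :=
  ∀ x : ℝ, 0 < x → Tendsto (fun t : ℝ => f (t * x) / f t) atTop (𝓝 (x ^ ρ))

/-- Value-at-Risk at level `1 - s`: `v_{1-s}(P) = inf {u | P((u,∞)) ≤ s}`. -/
def VaR (P : Measure ℝ) (s : ℝ) : ℝ :=
  sInf {u : ℝ | P (Ioi u) ≤ ENNReal.ofReal s}

/-- `w` is a weight function with tail parameters `κ` and slowly varying `ℓ`:
nonnegative on `(0,1]`, integrates to one, and `w(t) ~ t^κ ℓ(1/t)` as `t → 0⁺`. -/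
structure IsWeight (w : ℝ → ℝ) (κ : ℝ) (ℓ : ℝ → ℝ) : Prop where
  nonneg : ∀ t ∈ Ioc (0:ℝ) 1, 0 ≤ w t
  total : (∫ t in Ioc (0:ℝ) 1, w t) = 1
  kappa_gt : -1 < κ
  slow : RegVary ℓ 0
  asym : Tendsto (fun t : ℝ => w t / (t ^ κ * ℓ (1 / t))) (𝓝[>] (0:ℝ)) (𝓝 1)

/-- Tail-weighted risk measure `ρ_{1-β}(P) = ∫₀¹ w(t) v_{1-βt}(P) dt`, `[0,∞]`-valued. -/
def tailRisk (w : ℝ → ℝ) (β : ℝ) (P : Measure ℝ) : ℝ≥0∞ :=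
  ∫⁻ t in Ioc (0:ℝ) 1, ENNReal.ofReal (w t * VaR P (β * t))

/-- Worst-case risk over a set of measures. -/
def worstRisk (w : ℝ → ℝ) (β : ℝ) (S : Set (Measure ℝ)) : ℝ≥0∞ :=
  ⨆ P ∈ S, tailRisk w β P

/-- Worst-case Value-at-Risk over a set of measures. -/
def worstVaR (S : Set (Measure ℝ)) (s : ℝ) : ℝ :=
  ⨆ P ∈ S, VaR P s

/-- Survival function `F̄_P(x) = P((x,∞))`. -/
def survival (P : Measure ℝ) (x : ℝ) : ℝ := (P (Ioi x)).toReal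

/-- `P` is heavy-tailed with index `γ`: its survival function is `RV(-γ)`. -/
def HeavyTailed (P : Measure ℝ) (γ : ℝ) : Prop := RegVary (survival P) (-γ)

/-- Cumulative hazard `Λ_P(x) = - log P((x,∞))`. -/
def hazard (P : Measure ℝ) (x : ℝ) : ℝ := - Real.log (survival P x)

/-- `P` has Weibull-type tails with index `γ`: its cumulative hazard is `RV(γ)`. -/
def WeibullTailed (P : Measure ℝ) (γ : ℝ) : Prop := RegVary (hazard P) γ

/-- Couplings of two measures on `ℝ`. -/
def Couplings (P R : Measure ℝ) : Set (Measure (ℝ × ℝ)) :=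
  {π | π.map Prod.fst = P ∧ π.map Prod.snd = R}

/-- `p`-Wasserstein distance. -/
def Wdist (p : ℝ) (P R : Measure ℝ) : ℝ≥0∞ :=
  (⨅ π ∈ Couplings P R, ∫⁻ z : ℝ × ℝ, ENNReal.ofReal (|z.1 - z.2| ^ p) ∂π) ^ (1 / p)

/-- Wasserstein ball of radius `δ` around `P₀`. -/
def WBall (p δ : ℝ) (P₀ : Measure ℝ) : Set (Measure ℝ) :=
  {P | IsProbabilityMeasure P ∧ Wdist p P P₀ ≤ ENNReal.ofReal δ}

/-- `φ`-divergence `D_φ(P,R)`, equal to `+∞` unless `P ≪ R`. -/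
def phiDiv {α : Type*} [MeasurableSpace α] (φ : ℝ → ℝ) (P R : Measure α) : ℝ≥0∞ :=
  if P ≪ R then lintegral R (fun x => ENNReal.ofReal (φ (P.rnDeriv R x).toReal)) else ⊤

/-- `φ`-divergence ball of radius `δ` around `R`. -/
def phiBall {α : Type*} [MeasurableSpace α] (φ : ℝ → ℝ) (δ : ℝ) (R : Measure α) :
    Set (Measure α) :=
  {P | IsProbabilityMeasure P ∧ phiDiv φ P R ≤ ENNReal.ofReal δ}

/-- The smoothness assumption on `φ`: twice differentiable, convex,
`φ(1) = φ'(1) = 0`, and `φ(x)/x → ∞`. -/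
structure PhiSmooth (φ : ℝ → ℝ) : Prop where
  nonneg : ∀ x : ℝ, 0 ≤ x → 0 ≤ φ x
  diff1 : Differentiable ℝ φ
  diff2 : Differentiable ℝ (deriv φ)
  convex : ConvexOn ℝ (Ici 0) φ
  at_one : φ 1 = 0
  deriv_one : deriv φ 1 = 0
  superlinear : Tendsto (fun x : ℝ => φ x / x) atTop atTop

/-- Conditional Value-at-Risk `C_{1-β}(P) = β⁻¹ ∫₀^β v_{1-s}(P) ds`. -/
def CVaR (β : ℝ) (P : Measure ℝ) : ℝ := β⁻¹ * ∫ s in Ioc (0:ℝ) β, VaR P s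


/-! The witnesses reweight `P₀` on a tail `(u, ∞)`: the tail gets mass `ε = δ / (4Λ)`, where
`Λ = -log P₀(u, ∞)` is the cumulative hazard at `u`, and the rest is rescaled uniformly. Since
`φ(x) ~ x log x`, the tail contributes at most about `2ε log (ε / P₀(u, ∞)) ≤ 2εΛ = δ/2` to the
divergence and the bulk only `o(1)`, so for large `u` the reweighted measure lies in the ball. Its Value-at-Risk
at every level below `ε` is at least `u`, so its risk is of order `u / Λ(u)`. Both tail assumptions
give `Λ(2t) ≤ r Λ(t)` eventually for some `r < 2`, so `u / Λ(u)` is unbounded along `u = T 2ⁿ`. -/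

lemma tendsto_measure_Ioi_atTop_zero (μ : Measure ℝ) [IsFiniteMeasure μ] :
    Tendsto (fun x => μ (Ioi x)) atTop (𝓝 0) := by
  have h := tendsto_measure_iInter_atTop (μ := μ) (fun x => measurableSet_Ioi.nullMeasurableSet)
    (fun _ _ hxy => Ioi_subset_Ioi hxy) ⟨0, measure_ne_top μ _⟩
  have hempty : ⋂ x : ℝ, Ioi x = ∅ := by
    ext y
    simpa using ⟨y, le_rfl⟩
  rwa [hempty, measure_empty] at h

lemma RegVary.frequently_ne_zero {f : ℝ → ℝ} {ρ : ℝ} (h : RegVary f ρ) :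
    ∃ᶠ t in atTop, f t ≠ 0 := by
  intro hzero
  have hlim : Tendsto (fun t => f (t * 2) / f t) atTop (𝓝 0) :=
    tendsto_const_nhds.congr' <| by
      filter_upwards [hzero] with t ht
      rw [not_not.mp ht, div_zero]
  exact (Real.rpow_pos_of_pos two_pos ρ).ne' (tendsto_nhds_unique (h 2 two_pos) hlim)

lemma survival_pos_of_frequently_ne_zero {P : Measure ℝ} [IsFiniteMeasure P]
    (h : ∃ᶠ t in atTop, survival P t ≠ 0) (x : ℝ) : 0 < survival P x := by
  obtain ⟨t, hxt, ht⟩ := frequently_atTop.mp h x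
  have hmono : survival P t ≤ survival P x :=
    ENNReal.toReal_mono (measure_ne_top _ _) (measure_mono (Ioi_subset_Ioi hxt))
  exact lt_of_lt_of_le (lt_of_le_of_ne ENNReal.toReal_nonneg (Ne.symm ht)) hmono

lemma HeavyTailed.survival_pos {P : Measure ℝ} [IsFiniteMeasure P] {γ : ℝ}
    (h : HeavyTailed P γ) (x : ℝ) : 0 < survival P x :=
  survival_pos_of_frequently_ne_zero h.frequently_ne_zero x

lemma WeibullTailed.survival_pos {P : Measure ℝ} [IsFiniteMeasure P] {γ : ℝ}
    (h : WeibullTailed P γ) (x : ℝ) : 0 < survival P x :=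
  survival_pos_of_frequently_ne_zero
    (h.frequently_ne_zero.mono fun t ht hs => ht (by simp [hazard, hs])) x

lemma exp_neg_hazard {P : Measure ℝ} {x : ℝ} (h : 0 < survival P x) :
    Real.exp (-hazard P x) = survival P x := by
  rw [hazard, neg_neg, Real.exp_log h]

lemma tendsto_hazard_atTop {P : Measure ℝ} [IsFiniteMeasure P] (h : ∀ x, 0 < survival P x) :
    Tendsto (hazard P) atTop atTop := by
  have hsurv : Tendsto (survival P) atTop (𝓝[>] 0) :=
    tendsto_nhdsWithin_of_tendsto_nhds_of_eventually_within _
      ((ENNReal.tendsto_toReal ENNReal.zero_ne_top).comp (tendsto_measure_Ioi_atTop_zero P))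
      (Eventually.of_forall h)
  exact tendsto_neg_atBot_atTop.comp (Real.tendsto_log_nhdsGT_zero.comp hsurv)

lemma RegVary.exists_eventually_mul_two_le {f : ℝ → ℝ} {ρ : ℝ} (h : RegVary f ρ) (hρ : ρ < 1)
    (hpos : ∀ᶠ t in atTop, 0 < f t) : ∃ r < 2, ∀ᶠ t in atTop, f (t * 2) ≤ r * f t := by
  have hlt : (2:ℝ) ^ ρ < 2 := by
    simpa using Real.rpow_lt_rpow_of_exponent_lt one_lt_two hρ
  obtain ⟨r, hρr, hr2⟩ := exists_between hlt
  refine ⟨r, hr2, ?_⟩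
  filter_upwards [(h 2 two_pos).eventually_le_const hρr, hpos] with t hratio ht
  exact (div_le_iff₀ ht).mp hratio

lemma RegVary.exists_eventually_neg_log_mul_two_le {s : ℝ → ℝ} {ρ : ℝ} (h : RegVary s ρ)
    (hpos : ∀ t, 0 < s t) (hlog : Tendsto (fun t => -Real.log (s t)) atTop atTop) :
    ∃ r < 2, ∀ᶠ t in atTop, -Real.log (s (t * 2)) ≤ r * -Real.log (s t) := by
  set q : ℝ := 2 ^ ρ / 2
  have hq : 0 < q := by positivity
  refine ⟨3 / 2, by norm_num, ?_⟩
  filter_upwards [(h 2 two_pos).eventually_const_le (half_lt_self (by positivity)),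
    hlog.eventually_ge_atTop (-2 * Real.log q)] with t hratio hlarge
  have hq_le : Real.log q ≤ Real.log (s (t * 2)) - Real.log (s t) := by
    rw [← Real.log_div (hpos _).ne' (hpos _).ne']
    exact Real.log_le_log hq hratio
  linarith

lemma frequently_le_div_of_eventually_mul_two_le {Λ : ℝ → ℝ} {r : ℝ}
    (hpos : ∀ᶠ t in atTop, 0 < Λ t) (hr : r < 2) (h : ∀ᶠ t in atTop, Λ (t * 2) ≤ r * Λ t)
    (K : ℝ) : ∃ᶠ x in atTop, K ≤ x / Λ x := by
  obtain ⟨T, hT⟩ := eventually_atTop.mp ((hpos.and h).and (eventually_gt_atTop 0))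
  have hT0 : 0 < T := (hT T le_rfl).2
  have hT_le : ∀ n : ℕ, T ≤ T * 2 ^ n := fun n =>
    le_mul_of_one_le_right hT0.le (one_le_pow₀ one_le_two)
  have hr0 : 0 < r := by
    have h2 := (hT (T * 2) (by simpa using hT_le 1)).1.1
    exact pos_of_mul_pos_left (h2.trans_le (hT T le_rfl).1.2) (hT T le_rfl).1.1.le
  have hgeom : ∀ n : ℕ, Λ (T * 2 ^ n) ≤ Λ T * r ^ n := by
    intro n
    induction n with
    | zero => simp
    | succ n ih =>
      calc Λ (T * 2 ^ (n + 1)) = Λ (T * 2 ^ n * 2) := by rw [pow_succ, mul_assoc]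
        _ ≤ r * Λ (T * 2 ^ n) := (hT _ (hT_le n)).1.2
        _ ≤ r * (Λ T * r ^ n) := mul_le_mul_of_nonneg_left ih hr0.le
        _ = Λ T * r ^ (n + 1) := by ring
  have hratio : Tendsto (fun n : ℕ => T * 2 ^ n / Λ (T * 2 ^ n)) atTop atTop := by
    refine tendsto_atTop_mono (fun n => ?_) ((tendsto_pow_atTop_atTop_of_one_lt
      ((one_lt_div hr0).mpr hr)).const_mul_atTop (div_pos hT0 (hT T le_rfl).1.1))
    calc T / Λ T * (2 / r) ^ n = T * 2 ^ n / (Λ T * r ^ n) := by rw [div_pow]; ring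
      _ ≤ T * 2 ^ n / Λ (T * 2 ^ n) :=
        div_le_div_of_nonneg_left (by positivity) (hT _ (hT_le n)).1.1 (hgeom n)
  exact ((tendsto_pow_atTop_atTop_of_one_lt one_lt_two).const_mul_atTop hT0).frequently
    (hratio.eventually_ge_atTop K).frequently

section Reweight

variable {α : Type*} [MeasurableSpace α] {μ : Measure α} {A : Set α} {ε : ℝ}

lemma lintegral_piecewise_ofReal [IsProbabilityMeasure μ] (hA : MeasurableSet A) {b a : ℝ}
    (hb : 0 ≤ b) (ha : 0 ≤ a) :
    ∫⁻ x, A.piecewise (fun _ => ENNReal.ofReal b) (fun _ => ENNReal.ofReal a) x ∂μ =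
      ENNReal.ofReal (μ.real A * b + (1 - μ.real A) * a) := by
  rw [lintegral_piecewise hA, setLIntegral_const, setLIntegral_const, ← ofReal_measureReal,
    ← ofReal_measureReal, probReal_compl_eq_one_sub hA, ← ENNReal.ofReal_mul hb,
    ← ENNReal.ofReal_mul ha, ← ENNReal.ofReal_add (by positivity)
      (mul_nonneg ha (sub_nonneg.mpr measureReal_le_one)), mul_comm b, mul_comm a]

def reweight (μ : Measure α) (A : Set α) (ε : ℝ) : Measure α :=
  μ.withDensity <| A.piecewise (fun _ => ENNReal.ofReal (ε / μ.real A))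
    (fun _ => ENNReal.ofReal ((1 - ε) / (1 - μ.real A)))

lemma reweight_apply_self [IsFiniteMeasure μ] (hA : MeasurableSet A) (hs : 0 < μ.real A)
    (hε : 0 ≤ ε) : reweight μ A ε A = ENNReal.ofReal ε := by
  rw [reweight, withDensity_apply _ hA, setLIntegral_congr_fun hA (Set.piecewise_eqOn A _ _),
    setLIntegral_const, ← ofReal_measureReal, ← ENNReal.ofReal_mul (by positivity),
    div_mul_cancel₀ _ hs.ne']

lemma isProbabilityMeasure_reweight [IsProbabilityMeasure μ] (hA : MeasurableSet A)
    (hs : μ.real A ∈ Ioo 0 1) (hε : ε ∈ Icc 0 1) : IsProbabilityMeasure (reweight μ A ε) := by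
  obtain ⟨hs0, hs1⟩ := hs
  obtain ⟨hε0, hε1⟩ := hε
  constructor
  rw [reweight, withDensity_apply _ MeasurableSet.univ, Measure.restrict_univ,
    lintegral_piecewise_ofReal hA (by positivity)
      (div_nonneg (sub_nonneg.mpr hε1) (sub_pos.mpr hs1).le),
    mul_div_cancel₀ _ hs0.ne', mul_div_cancel₀ _ (sub_pos.mpr hs1).ne']
  simp

lemma phiDiv_reweight [IsProbabilityMeasure μ] {φ : ℝ → ℝ} (hφ : ∀ x, 0 ≤ x → 0 ≤ φ x)
    (hA : MeasurableSet A) (hs : μ.real A ∈ Ioo 0 1) (hε : ε ∈ Icc 0 1) :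
    phiDiv φ (reweight μ A ε) μ = ENNReal.ofReal
      (μ.real A * φ (ε / μ.real A) + (1 - μ.real A) * φ ((1 - ε) / (1 - μ.real A))) := by
  obtain ⟨hs0, hs1⟩ := hs
  obtain ⟨hε0, hε1⟩ := hε
  have hb : 0 ≤ ε / μ.real A := by positivity
  have ha : 0 ≤ (1 - ε) / (1 - μ.real A) := div_nonneg (sub_nonneg.mpr hε1) (sub_pos.mpr hs1).le
  have hac : reweight μ A ε ≪ μ := withDensity_absolutelyContinuous _ _
  rw [phiDiv, if_pos hac,
    ← lintegral_piecewise_ofReal hA (hφ _ hb) (hφ _ ha)]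
  refine lintegral_congr_ae ?_
  filter_upwards [Measure.rnDeriv_withDensity μ
    (Measurable.piecewise hA measurable_const measurable_const)] with x hx
  rw [reweight, hx]
  by_cases hxA : x ∈ A <;> simp [hxA, ENNReal.toReal_ofReal hb, ENNReal.toReal_ofReal ha]

end Reweight

lemma le_VaR_of_ofReal_lt_measure_Ioi {P : Measure ℝ} [IsFiniteMeasure P] {s u : ℝ} (hs : 0 < s)
    (h : ENNReal.ofReal s < P (Ioi u)) : u ≤ VaR P s := by
  refine le_csInf ?_ fun v hv => ?_
  · exact ((tendsto_measure_Ioi_atTop_zero P).eventually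
      (ge_mem_nhds (ENNReal.ofReal_pos.mpr hs))).exists
  · by_contra! hvu
    exact (h.trans_le (measure_mono (Ioi_subset_Ioi hvu.le))).not_ge hv

lemma ofReal_mul_le_tailRisk {w : ℝ → ℝ} {β : ℝ} {P : Measure ℝ} {c u t₀ : ℝ} (hc : 0 ≤ c)
    (hu : 0 ≤ u) (ht₀ : t₀ ≤ 1) (hw : ∀ t ∈ Ioo 0 t₀, c ≤ w t)
    (hVaR : ∀ t ∈ Ioo 0 t₀, u ≤ VaR P (β * t)) :
    ENNReal.ofReal (c * u * t₀) ≤ tailRisk w β P :=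
  calc ENNReal.ofReal (c * u * t₀) = ∫⁻ _ in Ioo 0 t₀, ENNReal.ofReal (c * u) := by
        rw [setLIntegral_const, Real.volume_Ioo, sub_zero, ← ENNReal.ofReal_mul (by positivity)]
    _ ≤ ∫⁻ t in Ioo 0 t₀, ENNReal.ofReal (w t * VaR P (β * t)) :=
        setLIntegral_mono' measurableSet_Ioo fun t ht => ENNReal.ofReal_le_ofReal
          (mul_le_mul (hw t ht) (hVaR t ht) hu (hc.trans (hw t ht)))
    _ ≤ tailRisk w β P := lintegral_mono_set fun t ht => ⟨ht.1, ht.2.le.trans ht₀⟩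

lemma ofReal_le_tailRisk_reweight {w : ℝ → ℝ} {P₀ : Measure ℝ} [IsProbabilityMeasure P₀]
    {β c u ε : ℝ} (hs : P₀.real (Ioi u) ∈ Ioo 0 1) (hε : ε ∈ Ioc 0 1) (hβ : 0 < β)
    (hεβ : ε / β ≤ 1) (hc : 0 ≤ c) (hu : 0 ≤ u) (hw : ∀ t ∈ Ioo 0 (ε / β), c ≤ w t) :
    ENNReal.ofReal (c * u * (ε / β)) ≤ tailRisk w β (reweight P₀ (Ioi u) ε) := by
  have := isProbabilityMeasure_reweight measurableSet_Ioi hs (Ioc_subset_Icc_self hε)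
  refine ofReal_mul_le_tailRisk hc hu hεβ hw fun t ht =>
    le_VaR_of_ofReal_lt_measure_Ioi (mul_pos hβ ht.1) ?_
  rw [reweight_apply_self measurableSet_Ioi hs.1 hε.1.le]
  exact (ENNReal.ofReal_lt_ofReal_iff hε.1).mpr ((lt_div_iff₀' hβ).mp ht.2)

lemma tendsto_phi_reweight_compl {φ : ℝ → ℝ} (hφ : ContinuousAt φ 1) (δ : ℝ) :
    Tendsto (fun Λ => φ ((1 - δ / (4 * Λ)) / (1 - Real.exp (-Λ)))) atTop (𝓝 (φ 1)) := by
  have hε : Tendsto (fun Λ : ℝ => δ / (4 * Λ)) atTop (𝓝 0) :=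
    tendsto_const_nhds.div_atTop (tendsto_id.const_mul_atTop four_pos)
  have h : Tendsto (fun Λ => (1 - δ / (4 * Λ)) / (1 - Real.exp (-Λ))) atTop
      (𝓝 ((1 - 0) / (1 - 0))) :=
    (tendsto_const_nhds.sub hε).div
      (tendsto_const_nhds.sub Real.tendsto_exp_neg_atTop_nhds_zero) (by norm_num)
  exact hφ.tendsto.comp (by simpa using h)

lemma eventually_exp_neg_mul_phi_le {φ : ℝ → ℝ}
    (hφlog : Tendsto (fun x => φ x / (x * Real.log x)) atTop (𝓝 1)) {δ : ℝ} (hδ : 0 < δ) :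
    ∀ᶠ Λ in atTop, Real.exp (-Λ) * φ (δ / (4 * Λ) / Real.exp (-Λ)) ≤ δ / 2 := by
  have hb : Tendsto (fun Λ => δ / (4 * Λ) / Real.exp (-Λ)) atTop atTop := by
    refine ((Real.tendsto_exp_div_pow_atTop 1).const_mul_atTop (by positivity : 0 < δ / 4)).congr
      fun Λ => ?_
    rw [Real.exp_neg]
    field_simp
  filter_upwards [hb.eventually (hφlog.eventually_le_const one_lt_two), hb.eventually_ge_atTop 2,
    eventually_ge_atTop (δ / 4), eventually_gt_atTop 0] with Λ hφb hb2 hΛδ hΛ0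
  set ε := δ / (4 * Λ)
  set b := ε / Real.exp (-Λ)
  have hε0 : 0 < ε := by positivity
  have hε1 : ε ≤ 1 := (div_le_one (by positivity)).mpr (by linarith)
  have hlogb : Real.log b ≤ Λ := by
    rw [Real.log_div hε0.ne' (Real.exp_pos _).ne', Real.log_exp]
    linarith [Real.log_nonpos hε0.le hε1]
  have hblogb : 0 < b * Real.log b := mul_pos (by linarith) (Real.log_pos (by linarith))
  calc Real.exp (-Λ) * φ b ≤ Real.exp (-Λ) * (2 * (b * Real.log b)) :=
        mul_le_mul_of_nonneg_left ((div_le_iff₀ hblogb).mp hφb) (Real.exp_pos _).le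
    _ = 2 * ε * Real.log b := by
        simp only [b]
        field_simp
    _ ≤ 2 * ε * Λ := mul_le_mul_of_nonneg_left hlogb (by positivity)
    _ = δ / 2 := by
        simp only [ε]
        field_simp
        ring

lemma measureReal_Ioi_mem_Ioo {P : Measure ℝ} {u : ℝ} (hs : 0 < survival P u)
    (hΛ : 0 < hazard P u) : P.real (Ioi u) ∈ Ioo 0 1 := by
  refine ⟨hs, ?_⟩
  rw [show P.real (Ioi u) = survival P u from rfl, ← exp_neg_hazard hs]
  exact Real.exp_lt_one_iff.mpr (neg_neg_of_pos hΛ)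

lemma eventually_reweight_mem_phiBall {φ : ℝ → ℝ} (hφ : PhiSmooth φ)
    (hφlog : Tendsto (fun x => φ x / (x * Real.log x)) atTop (𝓝 1)) {δ : ℝ} (hδ : 0 < δ)
    {P₀ : Measure ℝ} [IsProbabilityMeasure P₀] (hs : ∀ x, 0 < survival P₀ x) :
    ∀ᶠ u in atTop, reweight P₀ (Ioi u) (δ / (4 * hazard P₀ u)) ∈ phiBall φ δ P₀ := by
  have hφ1 : ContinuousAt φ 1 := hφ.diff1.continuous.continuousAt
  have hcompl := (tendsto_phi_reweight_compl hφ1 δ).eventually_le_const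
    (by linarith [hφ.at_one] : φ 1 < δ / 2)
  filter_upwards [(tendsto_hazard_atTop hs).eventually ((eventually_ge_atTop (δ / 4)).and
    (hcompl.and (eventually_exp_neg_mul_phi_le hφlog hδ)))] with u ⟨hΛδ, hφa, hφb⟩
  have hsu := measureReal_Ioi_mem_Ioo (hs u) (by linarith)
  have hε : δ / (4 * hazard P₀ u) ∈ Icc 0 1 :=
    ⟨div_nonneg hδ.le (by linarith), (div_le_one (by linarith)).mpr (by linarith)⟩
  refine ⟨isProbabilityMeasure_reweight measurableSet_Ioi hsu hε, ?_⟩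
  rw [phiDiv_reweight hφ.nonneg measurableSet_Ioi hsu hε]
  refine ENNReal.ofReal_le_ofReal ?_
  rw [show P₀.real (Ioi u) = Real.exp (-hazard P₀ u) from (exp_neg_hazard (hs u)).symm] at hsu ⊢
  have hφa0 := hφ.nonneg _ (div_nonneg (sub_nonneg.mpr hε.2) (sub_pos.mpr hsu.2).le)
  nlinarith [hsu.1]

lemma eventually_ofReal_le_tailRisk_reweight {P₀ : Measure ℝ} [IsProbabilityMeasure P₀]
    (hs : ∀ x, 0 < survival P₀ x) {δ : ℝ} (hδ : 0 < δ) {w : ℝ → ℝ} {m c β : ℝ} (hm : 0 < m)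
    (hc : 0 < c) (hw : ∀ t ∈ Ioo 0 m, c ≤ w t) (hβ : β ∈ Ioo 0 1) :
    ∀ᶠ u in atTop, ENNReal.ofReal (c * δ / (4 * β) * (u / hazard P₀ u)) ≤
      tailRisk w β (reweight P₀ (Ioi u) (δ / (4 * hazard P₀ u))) := by
  have hsmall : ∀ᶠ Λ : ℝ in atTop, δ / (4 * Λ) ≤ β * min m 1 :=
    (tendsto_const_nhds.div_atTop (tendsto_id.const_mul_atTop four_pos)).eventually_le_const
      (mul_pos hβ.1 (lt_min hm one_pos))
  filter_upwards [eventually_ge_atTop 0, (tendsto_hazard_atTop hs).eventually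
    ((eventually_gt_atTop 0).and hsmall)] with u hu ⟨hΛ0, hεm⟩
  have hεβ : δ / (4 * hazard P₀ u) / β ≤ min m 1 := (div_le_iff₀' hβ.1).mpr hεm
  have hε1 : δ / (4 * hazard P₀ u) ≤ 1 :=
    hεm.trans (mul_le_one₀ hβ.2.le (lt_min hm one_pos).le (min_le_right _ _))
  convert ofReal_le_tailRisk_reweight (measureReal_Ioi_mem_Ioo (hs u) hΛ0)
    ⟨by positivity, hε1⟩ hβ.1 (hεβ.trans (min_le_right _ _)) hc.le hu
    (fun t ht => hw t ⟨ht.1, ht.2.trans_le (hεβ.trans (min_le_left _ _))⟩) using 2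
  field_simp

theorem worstRisk_phiBall_eq_top_general
    (φ : ℝ → ℝ) (δ : ℝ) (hδ : 0 < δ) (hφ : PhiSmooth φ)
    (hφlog : Tendsto (fun x : ℝ => φ x / (x * Real.log x)) atTop (𝓝 1))
    (P₀ : Measure ℝ) [IsProbabilityMeasure P₀]
    (γ : ℝ)
    (hP : (1 < γ ∧ HeavyTailed P₀ γ) ∨ (0 < γ ∧ γ < 1 ∧ WeibullTailed P₀ γ))
    (w : ℝ → ℝ)
    (m : ℝ) (hm : 0 < m) (hwpos : ∃ c : ℝ, 0 < c ∧ ∀ t ∈ Ioo (0:ℝ) m, c ≤ w t)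
    (β : ℝ) (hβ : β ∈ Ioo (0:ℝ) 1) :
    worstRisk w β (phiBall φ δ P₀) = ⊤ := by
  obtain ⟨c, hc, hwc⟩ := hwpos
  have hs : ∀ x, 0 < survival P₀ x :=
    hP.elim (fun h => h.2.survival_pos) fun h => h.2.2.survival_pos
  have hΛ := tendsto_hazard_atTop hs
  obtain ⟨r, hr, hdouble⟩ : ∃ r < 2, ∀ᶠ t in atTop, hazard P₀ (t * 2) ≤ r * hazard P₀ t := by
    rcases hP with ⟨-, hheavy⟩ | ⟨-, hγ, hweibull⟩
    · exact hheavy.exists_eventually_neg_log_mul_two_le hs hΛ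
    · exact hweibull.exists_eventually_mul_two_le hγ (hΛ.eventually_gt_atTop 0)
  have hk : 0 < c * δ / (4 * β) := by have := hβ.1; positivity
  refine ENNReal.eq_top_of_forall_nnreal_le fun M => ?_
  obtain ⟨u, hratio, hmem, hrisk⟩ := ((frequently_le_div_of_eventually_mul_two_le
    (hΛ.eventually_gt_atTop 0) hr hdouble (M / (c * δ / (4 * β)))).and_eventually
    ((eventually_reweight_mem_phiBall hφ hφlog hδ hs).and
      (eventually_ofReal_le_tailRisk_reweight hs hδ hm hc hwc hβ))).exists
  calc (M : ℝ≥0∞) = ENNReal.ofReal M := (ENNReal.ofReal_coe_nnreal).symm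
    _ ≤ ENNReal.ofReal (c * δ / (4 * β) * (u / hazard P₀ u)) :=
        ENNReal.ofReal_le_ofReal ((div_le_iff₀' hk).mp hratio)
    _ ≤ tailRisk w β (reweight P₀ (Ioi u) (δ / (4 * hazard P₀ u))) := hrisk
    _ ≤ worstRisk w β (phiBall φ δ P₀) := le_biSup _ hmem

/-- for `φ(x) ~ x log x` and `P₀` heavy-tailed with `γ > 1` or Weibull-type
with `γ < 1`, and a weight function bounded below near `0`, the worst-case risk over the
φ-divergence ball is infinite. -/
theorem worstRisk_phiBall_eq_top
    (φ : ℝ → ℝ) (δ : ℝ) (hδ : 0 < δ) (hφ : PhiSmooth φ)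
    (hφlog : Tendsto (fun x : ℝ => φ x / (x * Real.log x)) atTop (𝓝 1))
    (P₀ : Measure ℝ) [IsProbabilityMeasure P₀]
    (γ : ℝ)
    (hP : (1 < γ ∧ HeavyTailed P₀ γ) ∨ (0 < γ ∧ γ < 1 ∧ WeibullTailed P₀ γ))
    (w : ℝ → ℝ) (κ : ℝ) (ℓ : ℝ → ℝ) (hw : IsWeight w κ ℓ)
    (m : ℝ) (hm : 0 < m) (hwpos : ∃ c : ℝ, 0 < c ∧ ∀ t ∈ Ioo (0:ℝ) m, c ≤ w t)
    (β : ℝ) (hβ : β ∈ Ioo (0:ℝ) 1) :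
    worstRisk w β (phiBall φ δ P₀) = ⊤ :=
  worstRisk_phiBall_eq_top_general φ δ hδ hφ hφlog P₀ γ hP w m hm hwpos β hβ

end
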